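/- Let G be a finite connected simple graph that is not regular, i.e., there exist adjacent vertices i, j with d_i ≠ d_j. Then for every nonzero constant c ∈ ℝ, the feature matrix X with all rows equal to the constant vector c·(1,…,1) ∈ ℝ^m (m ≥ 1) satisfies E_{Δ_norm}(X) = tr(Xᵀ Δ_norm X) > 0. Hence the normalized Dirichlet energy violates the axiom that constant signals have zero energy. -/
import Mathlib
open Matrix BigOperators

lemma amgm_le' (x y : ℝ) (hx : 0 < x) (hy : 0 < y) :
    (Real.sqrt x * Real.sqrt y)⁻¹ ≤ (2*x)⁻¹ + (2*y)⁻¹ := by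
  have hsx := Real.sqrt_pos.mpr hx
  have hsy := Real.sqrt_pos.mpr hy
  have hx2 := Real.sq_sqrt hx.le
  have hy2 := Real.sq_sqrt hy.le
  rw [inv_eq_one_div, inv_eq_one_div, inv_eq_one_div,
    div_add_div _ _ (by positivity) (by positivity),
    div_le_div_iff₀ (by positivity) (by positivity)]
  nlinarith [sq_nonneg (Real.sqrt x - Real.sqrt y), mul_pos hsx hsy]

lemma amgm_lt' (x y : ℝ) (hx : 0 < x) (hy : 0 < y) (hne : x ≠ y) :
    (Real.sqrt x * Real.sqrt y)⁻¹ < (2*x)⁻¹ + (2*y)⁻¹ := by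
  have hsx := Real.sqrt_pos.mpr hx
  have hsy := Real.sqrt_pos.mpr hy
  have hx2 := Real.sq_sqrt hx.le
  have hy2 := Real.sq_sqrt hy.le
  have hne' : Real.sqrt x ≠ Real.sqrt y := fun h => hne (by rw [← hx2, ← hy2, h])
  rw [inv_eq_one_div, inv_eq_one_div, inv_eq_one_div,
    div_add_div _ _ (by positivity) (by positivity),
    div_lt_div_iff₀ (by positivity) (by positivity)]
  nlinarith [sq_pos_of_ne_zero (sub_ne_zero.mpr hne'), mul_pos hsx hsy]

/-- For a finite connected non-regular simple graph (some edge joins vertices of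
different degrees) with positive degrees, any constant nonzero signal has strictly
positive normalized Dirichlet energy: the normalized energy violates the axiom that
constant signals have zero energy. -/
theorem normalized_energy_pos_on_constant_signal
    {n m : ℕ} (G : SimpleGraph (Fin n)) [DecidableRel G.Adj]
    (hconn : G.Connected) (hd : ∀ i, 0 < G.degree i)
    (hnonreg : ∃ i j, G.Adj i j ∧ G.degree i ≠ G.degree j)
    (hm : 0 < m) (c : ℝ) (hc : c ≠ 0) :
    0 < Matrix.trace
      ((Matrix.of (fun (_ : Fin n) (_ : Fin m) => c))ᵀ *
        ((1 : Matrix (Fin n) (Fin n) ℝ) -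
          Matrix.diagonal (fun i => (Real.sqrt (G.degree i))⁻¹) * G.adjMatrix ℝ *
            Matrix.diagonal (fun i => (Real.sqrt (G.degree i))⁻¹)) *
        Matrix.of (fun (_ : Fin n) (_ : Fin m) => c)) := by
  classical
  set d : Fin n → ℝ := fun i => (G.degree i : ℝ) with hd_def
  have hdpos : ∀ i, 0 < d i := fun i => by simp only [hd_def]; exact_mod_cast hd i
  set Δ : Matrix (Fin n) (Fin n) ℝ :=
    (1 : Matrix (Fin n) (Fin n) ℝ) -
      Matrix.diagonal (fun i => (Real.sqrt (G.degree i))⁻¹) * G.adjMatrix ℝ *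
        Matrix.diagonal (fun i => (Real.sqrt (G.degree i))⁻¹) with hΔ
  set X : Matrix (Fin n) (Fin m) ℝ := Matrix.of (fun _ _ => c) with hX
  -- trace equals m * c^2 * S
  have hΔentry : ∀ i j, Δ i j =
      (if i = j then (1:ℝ) else 0) -
        (Real.sqrt (d i))⁻¹ * (G.adjMatrix ℝ i j) * (Real.sqrt (d j))⁻¹ := by
    intro i j
    simp [hΔ, Matrix.sub_apply, Matrix.one_apply, Matrix.mul_apply,
      Matrix.diagonal_apply, Finset.sum_ite_eq, Finset.sum_ite_eq', hd_def]
    rw [Finset.sum_eq_single i]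
    · split_ifs <;> simp_all
    · intro b _ hb; simp [Ne.symm hb]
    · simp
  set A : Matrix (Fin n) (Fin n) ℝ := G.adjMatrix ℝ with hA
  have hrow : ∀ i, ∑ j, A i j = d i := by
    intro i
    simp [hA, SimpleGraph.adjMatrix_apply, hd_def, SimpleGraph.degree,
      SimpleGraph.neighborFinset_eq_filter, Finset.sum_boole]
  have hAsymm : ∀ i j, A i j = A j i := by
    intro i j; simp [hA, SimpleGraph.adjMatrix_apply, G.adj_comm]
  have hAnonneg : ∀ i j, 0 ≤ A i j := by
    intro i j; simp [hA, SimpleGraph.adjMatrix_apply]; positivity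
  -- the key strict inequality
  have hT : ∑ i, ∑ j, (Real.sqrt (d i))⁻¹ * A i j * (Real.sqrt (d j))⁻¹ < (n:ℝ) := by
    have hlt : ∑ i, ∑ j, (Real.sqrt (d i))⁻¹ * A i j * (Real.sqrt (d j))⁻¹
        < ∑ i, ∑ j, A i j * ((2 * d i)⁻¹ + (2 * d j)⁻¹) := by
      rw [← Finset.sum_product', ← Finset.sum_product']
      obtain ⟨i0, j0, hadj, hne⟩ := hnonreg
      apply Finset.sum_lt_sum
      · rintro ⟨i, j⟩ _
        by_cases h : G.Adj i j
        · have hle := amgm_le' (d i) (d j) (hdpos i) (hdpos j)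
          simp only [hA, SimpleGraph.adjMatrix_apply, if_pos h, mul_one, one_mul]
          rw [← mul_inv]
          exact hle
        · simp [hA, SimpleGraph.adjMatrix_apply, h]
      · refine ⟨(i0, j0), Finset.mem_product.mpr ⟨Finset.mem_univ _, Finset.mem_univ _⟩, ?_⟩
        have hne' : d i0 ≠ d j0 := by
          simp only [hd_def]; exact_mod_cast hne
        have hlt' := amgm_lt' (d i0) (d j0) (hdpos i0) (hdpos j0) hne'
        simp only [hA, SimpleGraph.adjMatrix_apply, if_pos hadj, mul_one, one_mul]
        rw [← mul_inv]
        exact hlt'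
    have heq : ∑ i, ∑ j, A i j * ((2 * d i)⁻¹ + (2 * d j)⁻¹) = (n:ℝ) := by
      have h1 : ∑ i, ∑ j, A i j * (2 * d i)⁻¹ = (n:ℝ) / 2 := by
        have hptw : ∀ i : Fin n, ∑ j, A i j * (2 * d i)⁻¹ = (1:ℝ)/2 := by
          intro i
          have h0 : d i ≠ 0 := (hdpos i).ne'
          rw [← Finset.sum_mul, hrow]
          field_simp
        rw [Finset.sum_congr rfl fun i _ => hptw i, Finset.sum_const,
          Finset.card_univ, Fintype.card_fin, nsmul_eq_mul]
        ring
      have h2 : ∑ i, ∑ j, A i j * (2 * d j)⁻¹ = (n:ℝ) / 2 := by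
        rw [Finset.sum_comm]
        calc ∑ j, ∑ i, A i j * (2 * d j)⁻¹
            = ∑ j, ∑ i, A j i * (2 * d j)⁻¹ := by
              exact Finset.sum_congr rfl fun j _ => Finset.sum_congr rfl fun i _ => by
                rw [hAsymm]
          _ = (n:ℝ) / 2 := by
              have hptw : ∀ j : Fin n, ∑ i, A j i * (2 * d j)⁻¹ = (1:ℝ)/2 := by
                intro j
                have h0 : d j ≠ 0 := (hdpos j).ne'
                rw [← Finset.sum_mul, hrow]
                field_simp
              rw [Finset.sum_congr rfl fun j _ => hptw j, Finset.sum_const,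
                Finset.card_univ, Fintype.card_fin, nsmul_eq_mul]
              ring
      calc ∑ i, ∑ j, A i j * ((2 * d i)⁻¹ + (2 * d j)⁻¹)
          = (∑ i, ∑ j, A i j * (2 * d i)⁻¹) + ∑ i, ∑ j, A i j * (2 * d j)⁻¹ := by
            rw [← Finset.sum_add_distrib]
            exact Finset.sum_congr rfl fun i _ => by
              rw [← Finset.sum_add_distrib]
              exact Finset.sum_congr rfl fun j _ => by ring
        _ = (n:ℝ) := by rw [h1, h2]; ring
    linarith
  -- S > 0
  have hS : 0 < ∑ i, ∑ j, Δ i j := by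
    have hSeq : ∑ i, ∑ j, Δ i j
        = (n:ℝ) - ∑ i, ∑ j, (Real.sqrt (d i))⁻¹ * A i j * (Real.sqrt (d j))⁻¹ := by
      have e1 : ∀ i : Fin n, ∑ j, Δ i j
          = 1 - ∑ j, (Real.sqrt (d i))⁻¹ * A i j * (Real.sqrt (d j))⁻¹ := by
        intro i
        rw [← (by simp : (∑ j, if i = j then (1:ℝ) else 0) = 1), ← Finset.sum_sub_distrib]
        exact Finset.sum_congr rfl fun j _ => hΔentry i j
      rw [Finset.sum_congr rfl fun i _ => e1 i, Finset.sum_sub_distrib,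
        Finset.sum_const, Finset.card_univ, Fintype.card_fin, nsmul_eq_mul, mul_one]
    rw [hSeq]
    linarith
  -- trace computation
  have hdiag : ∀ k : Fin m, (Xᵀ * Δ * X) k k = c^2 * ∑ i, ∑ j, Δ i j := by
    intro k
    simp only [Matrix.mul_apply, Matrix.transpose_apply, hX, Matrix.of_apply,
      Finset.sum_mul, Finset.mul_sum]
    rw [Finset.sum_comm]
    refine Finset.sum_congr rfl fun i _ => Finset.sum_congr rfl fun j _ => by ring
  have htr : Matrix.trace (Xᵀ * Δ * X) = (m:ℝ) * (c^2 * ∑ i, ∑ j, Δ i j) := by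
    simp only [Matrix.trace, Matrix.diag_apply, hdiag, Finset.sum_const,
      Finset.card_univ, Fintype.card_fin, nsmul_eq_mul]
  rw [htr]
  have hm' : (0:ℝ) < m := by exact_mod_cast hm
  have hc2 : 0 < c^2 := by positivity
  positivity
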